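/- arXiv:2203.13798 — 7 statements merged into one kernel-verified Lean document; each statement's English description precedes it below -/
import Mathlib

section
/- Let n ≥ 2 and let H be a non-abelian free subgroup of the Higman–Thompson group T_n. Then for every point κ ∈ ℤ[1/n]/ℤ of the circle (equivalently, every point in the T_n-orbit of 0 + ℤ), the stabilizer {h ∈ H : h(κ) = κ} is a cyclic group (possibly trivial). -/
noncomputable section

/-- The circle `S¹ = ℝ/ℤ`. -/
abbrev Circle1 := AddCircle (1 : ℝ)

/-- The group of self-homeomorphisms of a space, with `(f * g) x = f (g x)`. -/
instance {X : Type*} [TopologicalSpace X] : Group (X ≃ₜ X) where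
  mul f g := g.trans f
  one := Homeomorph.refl _
  inv := Homeomorph.symm
  mul_assoc _ _ _ := Homeomorph.ext fun _ => rfl
  one_mul _ := Homeomorph.ext fun _ => rfl
  mul_one _ := Homeomorph.ext fun _ => rfl
  inv_mul_cancel f := Homeomorph.ext f.symm_apply_apply

/-- `x` lies in `ℤ[1/n]`. -/
def IsNAdicRational (n : ℕ) (x : ℝ) : Prop := ∃ (a : ℤ) (k : ℕ), x = (a : ℝ) / (n : ℝ) ^ k

/-- `F : ℝ → ℝ` is piecewise linear on `[0,1]` with slopes integer powers of `n` and
breakpoints in `ℤ[1/n]`. -/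
def IsPiecewiseLinearN (n : ℕ) (F : ℝ → ℝ) : Prop :=
  ∃ (k : ℕ) (x : ℕ → ℝ), 0 < k ∧ x 0 = 0 ∧ x k = 1 ∧
    (∀ i < k, x i < x (i + 1)) ∧
    (∀ i ≤ k, IsNAdicRational n (x i)) ∧
    (∀ i < k, ∃ (m : ℤ) (c : ℝ), ∀ t ∈ Set.Icc (x i) (x (i + 1)),
      F t = (n : ℝ) ^ m * t + c)

/-- Membership in the Higman–Thompson group `T_n`, viewed as a group of
orientation-preserving self-homeomorphisms of `ℝ/ℤ`: `f` lifts to a strictly increasing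
homeomorphism `F` of `ℝ` commuting with translation by `1`, which is piecewise linear with
slopes powers of `n` and breakpoints in `ℤ[1/n]`. -/
def TnMem (n : ℕ) (f : Circle1 ≃ₜ Circle1) : Prop :=
  ∃ F : ℝ ≃ₜ ℝ, StrictMono F ∧ (∀ t : ℝ, F (t + 1) = F t + 1) ∧
    (∀ t : ℝ, f ((t : ℝ) : Circle1) = ((F t : ℝ) : Circle1)) ∧
    IsPiecewiseLinearN n F

/-!
The stabilizer of `κ = x₀` acts on `ℝ` by the lifts of its elements fixing `x₀`: increasing
homeomorphisms commuting with `t ↦ t + 1` that are affine on each side of every point. We are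
then in the setting of Brin and Squier. Near a global fixed point `α` every element is a
homothety of centre `α`, so commutators are the identity near `α`. Let a commutator `w ≠ 1` move
a point of a gap `(α, β)` of the global fixed point set. Its support in that gap lies in a
compact `[m, s]`, and orbits in the gap are unbounded towards `β` (the supremum of a bounded
orbit is a global fixed point), so some conjugate `v` of `w` is supported in the gap beyond `s`.
Then `⁅w, v⁆` is a commutator whose support meets fewer gaps, hence trivial by induction. So `w`
and `v` commute; in a free group they are then powers of a common element and have the same
fixed points, which is absurd since `v` fixes the point moved by `w`. A free group in which all
commutators are trivial is cyclic.
-/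

open Function Set Filter Topology MulAction
open scoped commutatorElement

theorem FreeGroup.subsingleton_of_commute {X : Type*} (h : ∀ a b : FreeGroup X, Commute a b) :
    Subsingleton X := by
  classical
  refine ⟨fun s t => by_contra fun hst => ?_⟩
  let φ : FreeGroup X →* Equiv.Perm (Fin 3) :=
    FreeGroup.lift fun x => if x = s then Equiv.swap 0 1 else Equiv.swap 1 2
  have hφ := (h (of s) (of t)).map φ
  simp only [φ, FreeGroup.lift_apply_of, if_neg (Ne.symm hst)] at hφ
  exact absurd hφ.eq (by decide)

theorem IsFreeGroup.isCyclic_of_isMulCommutative (G : Type*) [Group G] [IsFreeGroup G]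
    [IsMulCommutative G] : IsCyclic G := by
  let e := IsFreeGroup.toFreeGroup G
  have : Subsingleton (IsFreeGroup.Generators G) := FreeGroup.subsingleton_of_commute fun a b => by
    simpa using Commute.map (mul_comm' (e.symm a) (e.symm b)) e.toMonoidHom
  rw [e.isCyclic]
  cases isEmpty_or_nonempty (IsFreeGroup.Generators G)
  · infer_instance
  · have := uniqueOfSubsingleton (Classical.arbitrary (IsFreeGroup.Generators G))
    infer_instance

theorem IsFreeGroup.exists_zpow_eq_of_commute {G : Type*} [Group G] [IsFreeGroup G] {x y : G}
    (hxy : Commute x y) : ∃ (z : G) (i j : ℤ), z ^ i = x ∧ z ^ j = y := by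
  let K := Subgroup.closure ({x, y} : Set G)
  have : IsMulCommutative K := Subgroup.isMulCommutative_closure <| by
    rintro a (rfl | rfl) b (rfl | rfl)
    exacts [rfl, hxy.eq, hxy.eq.symm, rfl]
  obtain ⟨z, hz⟩ := (IsFreeGroup.isCyclic_of_isMulCommutative K).exists_generator
  obtain ⟨i, hi⟩ := Subgroup.mem_zpowers_iff.1 (hz ⟨x, Subgroup.subset_closure (by simp)⟩)
  obtain ⟨j, hj⟩ := Subgroup.mem_zpowers_iff.1 (hz ⟨y, Subgroup.subset_closure (by simp)⟩)
  exact ⟨z, i, j, congrArg Subtype.val hi, congrArg Subtype.val hj⟩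

def HasAffineGerms (f : ℝ → ℝ) : Prop :=
  ∀ a : ℝ, (∃ s c : ℝ, ∀ᶠ t in 𝓝[≥] a, f t = s * t + c) ∧
    ∃ s c : ℝ, ∀ᶠ t in 𝓝[≤] a, f t = s * t + c

lemma eventually_eq_homothety_of_affine {f : ℝ → ℝ} {α s c : ℝ} {S : Set ℝ} (hαS : α ∈ S)
    (hα : f α = α) (h : ∀ᶠ t in 𝓝[S] α, f t = s * t + c) :
    ∀ᶠ t in 𝓝[S] α, f t = α + s * (t - α) := by
  have hc : f α = s * α + c := h.self_of_nhdsWithin hαS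
  filter_upwards [h] with t ht
  linear_combination ht - hc + hα

lemma HasAffineGerms.exists_homothety_nhdsGT {f : ℝ → ℝ} (hf : HasAffineGerms f) {α : ℝ}
    (hα : f α = α) : ∃ r, ∀ᶠ t in 𝓝[>] α, f t = α + r * (t - α) := by
  obtain ⟨s, c, h⟩ := (hf α).1
  exact ⟨s, (eventually_eq_homothety_of_affine self_mem_Ici hα h).filter_mono
    (nhdsWithin_mono _ Ioi_subset_Ici_self)⟩

lemma HasAffineGerms.exists_homothety_nhdsLT {f : ℝ → ℝ} (hf : HasAffineGerms f) {α : ℝ}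
    (hα : f α = α) : ∃ r, ∀ᶠ t in 𝓝[<] α, f t = α + r * (t - α) := by
  obtain ⟨s, c, h⟩ := (hf α).2
  exact ⟨s, (eventually_eq_homothety_of_affine self_mem_Iic hα h).filter_mono
    (nhdsWithin_mono _ Iio_subset_Iic_self)⟩

lemma homothety_ratio_unique {l : Filter ℝ} [l.NeBot] {α a b : ℝ} (hl : ∀ᶠ t in l, t ≠ α)
    (h : ∀ᶠ t in l, α + a * (t - α) = α + b * (t - α)) : a = b := by
  obtain ⟨t, ht, h⟩ := (hl.and h).exists
  exact mul_right_cancel₀ (sub_ne_zero.2 ht) (by linarith)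

/-- The ratios of the homotheties form a homomorphism to the commutative group `ℝˣ`. -/
theorem eventually_commutatorElement_smul_eq_self {G : Type*} [Group G] [MulAction G ℝ]
    {l : Filter ℝ} [l.NeBot] {α : ℝ} (hl : ∀ᶠ t in l, t ≠ α)
    (htendsto : ∀ g : G, Tendsto (g • ·) l l)
    (hhom : ∀ g : G, ∃ r, ∀ᶠ t in l, g • t = α + r * (t - α)) (p q : G) :
    ∀ᶠ t in l, ⁅p, q⁆ • t = t := by
  choose r hr using hhom
  let ratio : G →* ℝ :=
    { toFun := r
      map_one' := homothety_ratio_unique hl <| by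
        filter_upwards [hr 1] with t ht
        rw [← ht, one_smul]; ring
      map_mul' := fun g h => homothety_ratio_unique hl <| by
        filter_upwards [hr (g * h), hr h, (htendsto h).eventually (hr g)] with t hgh hh hg
        rw [← hgh, mul_smul, hg, hh]; ring }
  have hratio : r ⁅p, q⁆ = 1 := by
    have h := map_commutatorElement ratio.toHomUnits p q
    rw [commutatorElement_eq_one_iff_commute.2 (Commute.all (ratio.toHomUnits p) _)] at h
    exact congrArg Units.val h
  filter_upwards [hr ⁅p, q⁆] with t ht
  rw [ht, hratio]; ring

lemma StrictMono.tendsto_nhdsGT_of_eq {f : ℝ → ℝ} (hf : StrictMono f) {α : ℝ}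
    (hc : ContinuousAt f α) (hα : f α = α) : Tendsto f (𝓝[>] α) (𝓝[>] α) := by
  have := hc.continuousWithinAt.tendsto_nhdsWithin (t := Ioi (f α)) fun _ ht => hf ht
  rwa [hα] at this

lemma StrictMono.tendsto_nhdsLT_of_eq {f : ℝ → ℝ} (hf : StrictMono f) {α : ℝ}
    (hc : ContinuousAt f α) (hα : f α = α) : Tendsto f (𝓝[<] α) (𝓝[<] α) := by
  have := hc.continuousWithinAt.tendsto_nhdsWithin (t := Iio (f α)) fun _ ht => hf ht
  rwa [hα] at this

lemma Nat.exists_lt_not_and_succ_of_not_zero {P : ℕ → Prop} {k : ℕ} (h0 : ¬P 0) (hk : P k) :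
    ∃ i < k, ¬P i ∧ P (i + 1) := by
  induction k with
  | zero => exact absurd hk h0
  | succ k ih =>
    by_cases hPk : P k
    · obtain ⟨i, hi, h⟩ := ih hPk
      exact ⟨i, by omega, h⟩
    · exact ⟨k, by omega, hPk, hk⟩

lemma map_add_intCast_of_map_add_one {f : ℝ → ℝ} (hf : ∀ t, f (t + 1) = f t + 1) (t : ℝ)
    (m : ℤ) : f (t + m) = f t + m :=
  AddConstMapClass.map_add_int (AddConstMap.mk f hf) t m

theorem IsPiecewiseLinearN.hasAffineGerms {n : ℕ} {F : ℝ → ℝ} (hF : IsPiecewiseLinearN n F)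
    (hper : ∀ t, F (t + 1) = F t + 1) : HasAffineGerms F := by
  obtain ⟨k, x, -, hx0, hxk, -, -, hpieces⟩ := hF
  have affine_on : ∀ i < k, ∀ M : ℤ, ∃ s c : ℝ,
      ∀ t ∈ Icc (x i + M) (x (i + 1) + M), F t = s * t + c := by
    intro i hi M
    obtain ⟨m, c, h⟩ := hpieces i hi
    refine ⟨(n : ℝ) ^ m, c + M - (n : ℝ) ^ m * M, fun t ht => ?_⟩
    have hshift := map_add_intCast_of_map_add_one hper (t - M) M
    rw [sub_add_cancel] at hshift
    rw [hshift, h (t - M) ⟨by linarith [ht.1], by linarith [ht.2]⟩]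
    ring
  intro a
  constructor
  · obtain ⟨i, hi, hxi, hxi'⟩ := Nat.exists_lt_not_and_succ_of_not_zero
      (P := fun j => Int.fract a < x j) (k := k) (by simp [hx0, Int.fract_nonneg])
      (by simpa [hxk] using Int.fract_lt_one a)
    obtain ⟨s, c, h⟩ := affine_on i hi ⌊a⌋
    have ha := Int.fract_add_floor a
    simp only [not_lt] at hxi
    refine ⟨s, c, mem_of_superset (Icc_mem_nhdsGE (show a < x (i + 1) + ⌊a⌋ by linarith))
      fun t ht => h t ⟨by linarith [ht.1], ht.2⟩⟩
  · set q := a - ⌈a⌉ + 1 with hq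
    obtain ⟨i, hi, hxi, hxi'⟩ := Nat.exists_lt_not_and_succ_of_not_zero
      (P := fun j => q ≤ x j) (k := k) (by simp [hx0, hq]; linarith [Int.ceil_lt_add_one a])
      (by simpa [hxk, hq] using Int.le_ceil a)
    obtain ⟨s, c, h⟩ := affine_on i hi (⌈a⌉ - 1)
    simp only [not_le] at hxi
    push_cast at h
    refine ⟨s, c, mem_of_superset (Icc_mem_nhdsLE (show x i + (⌈a⌉ - 1) < a by linarith))
      fun t ht => h t ⟨ht.1, by linarith [ht.2]⟩⟩

lemma HasAffineGerms.sub_const {f : ℝ → ℝ} (hf : HasAffineGerms f) (d : ℝ) :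
    HasAffineGerms fun t => f t - d := fun a => by
  obtain ⟨⟨s, c, h⟩, ⟨s', c', h'⟩⟩ := hf a
  exact ⟨⟨s, c - d, h.mono fun t ht => by simp only [ht]; ring⟩,
    ⟨s', c' - d, h'.mono fun t ht => by simp only [ht]; ring⟩⟩

lemma not_frequently_ne_of_affine_of_fixed {f : ℝ → ℝ} {J : Set ℝ} {s c y z : ℝ}
    (hJ : ∀ t ∈ J, f t = s * t + c) (hz : z ∈ J) (hy : y ∈ J) (hyz : y ≠ z) (hfz : f z = z)
    (hfy : f y = y) (hJy : J ∈ 𝓝[>] y) : ¬∃ᶠ u in 𝓝[>] y, f u ≠ u := by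
  have hz' := (hJ z hz).symm.trans hfz
  have hy' := (hJ y hy).symm.trans hfy
  have hs : s = 1 :=
    mul_right_cancel₀ (sub_ne_zero.2 hyz) (by linear_combination hy' - hz')
  have hc : c = 0 := by rw [hs] at hz'; linarith
  exact not_frequently.2 (mem_of_superset hJy fun u hu => by simp [hJ u hu, hs, hc])

/-- An accumulation point `z` of such fixed points is fixed, and on the side where they
accumulate `f` is affine with two fixed points, hence the identity near them, a contradiction. -/
theorem HasAffineGerms.finite_fixed_frequently_ne {f : ℝ → ℝ} (hf : HasAffineGerms f)
    (hc : Continuous f) {K : Set ℝ} (hK : IsCompact K) :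
    {t ∈ K | f t = t ∧ ∃ᶠ u in 𝓝[>] t, f u ≠ u}.Finite := by
  by_contra hinf
  obtain ⟨z, -, hz⟩ := Set.Infinite.exists_accPt_of_subset_isCompact hinf hK (sep_subset _ _)
  have hfz : f z = z := (isClosed_eq hc continuous_id).closure_subset_iff.2
    (fun t ht => ht.2.1) (mem_closure_iff_clusterPt.2 hz.clusterPt)
  rw [accPt_iff_frequently_nhdsNE, ← nhdsLT_sup_nhdsGT, frequently_sup] at hz
  rcases hz with hz | hz
  · obtain ⟨s, c, h⟩ := (hf z).2
    obtain ⟨l, hl, hJ⟩ := mem_nhdsLE_iff_exists_Ioc_subset.1 h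
    obtain ⟨y, ⟨-, hfy, hy⟩, hyl, hyz⟩ := (hz.and_eventually (Ioo_mem_nhdsLT hl)).exists
    exact not_frequently_ne_of_affine_of_fixed hJ ⟨hl, le_rfl⟩ ⟨hyl, hyz.le⟩ hyz.ne hfz hfy
      (mem_of_superset (Ioo_mem_nhdsGT hyz) fun u hu => ⟨hyl.trans hu.1, hu.2.le⟩) hy
  · obtain ⟨s, c, h⟩ := (hf z).1
    obtain ⟨r, hr, hJ⟩ := mem_nhdsGE_iff_exists_Ico_subset.1 h
    obtain ⟨y, ⟨-, hfy, hy⟩, hzy, hyr⟩ := (hz.and_eventually (Ioo_mem_nhdsGT hr)).exists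
    exact not_frequently_ne_of_affine_of_fixed hJ ⟨le_rfl, hr⟩ ⟨hzy.le, hyr⟩ hzy.ne' hfz hfy
      (mem_of_superset (Ioo_mem_nhdsGT hyr) fun u hu => ⟨hzy.le.trans hu.1.le, hu.2⟩) hy

lemma commutatorElement_smul_eq_self_of_disjoint {G X : Type*} [Group G] [MulAction G X]
    {I : Set X} (hI : ∀ g : G, ∀ t ∈ I, g • t ∈ I) {w v : G} (hwv : ∀ t ∈ I, w • t = t ∨ v • t = t)
    {t : X} (ht : t ∈ I) : ⁅w, v⁆ • t = t := by
  have moved : ∀ (g : G) (s : X), g • s ≠ s → g • g • s ≠ g • s :=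
    fun g s h h' => h (MulAction.injective g h')
  have hcomm : ∀ s ∈ I, w • v • s = v • w • s := by
    intro s hs
    by_cases hw : w • s = s <;> by_cases hv : v • s = s
    · rw [hv, hw, hv]
    · rw [hw]; exact (hwv _ (hI v s hs)).resolve_right (moved v s hv)
    · rw [hv]; exact ((hwv _ (hI w s hs)).resolve_left (moved w s hw)).symm
    · exact absurd (hwv s hs) (by tauto)
  calc ⁅w, v⁆ • t = w • v • (w⁻¹ • v⁻¹ • t) := by simp [commutatorElement_def, mul_smul]
    _ = v • w • (w⁻¹ • v⁻¹ • t) := hcomm _ (hI _ _ (hI _ _ ht))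
    _ = t := by simp

section Dynamics

variable {G : Type*} [Group G] [MulAction G ℝ]

lemma smul_mem_Ioo_of_mem_fixedPoints {g : G} (hg : StrictMono (g • · : ℝ → ℝ)) {α β : ℝ}
    (hα : α ∈ fixedPoints G ℝ) (hβ : β ∈ fixedPoints G ℝ) {t : ℝ} (ht : t ∈ Ioo α β) :
    g • t ∈ Ioo α β := by
  constructor
  · simpa only [hα g] using hg ht.1
  · simpa only [hβ g] using hg ht.2

lemma fixedBy_zpow_eq {g : G} (hg : StrictMono (g • · : ℝ → ℝ)) {j : ℤ} (hj : j ≠ 0) :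
    fixedBy ℝ (g ^ j) = fixedBy ℝ g := by
  have hnat : ∀ k : ℕ, 0 < k → fixedBy ℝ (g ^ k) = fixedBy ℝ g := fun k hk => by
    ext t
    simpa [← smul_iterate] using
      Function.Commute.id_right.iterate_pos_eq_iff_map_eq hg.monotone strictMono_id hk (x := t)
  obtain ⟨k, rfl | rfl⟩ := Int.eq_nat_or_neg j
  · exact_mod_cast hnat k (by omega)
  · rw [zpow_neg, fixedBy_inv, zpow_natCast, hnat k (by omega)]

theorem fixedBy_eq_of_commute [IsFreeGroup G] (hmono : ∀ g : G, StrictMono (g • · : ℝ → ℝ))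
    {w v : G} (hwv : Commute w v) (hw : w ≠ 1) (hv : v ≠ 1) : fixedBy ℝ w = fixedBy ℝ v := by
  obtain ⟨z, i, j, rfl, rfl⟩ := IsFreeGroup.exists_zpow_eq_of_commute hwv
  rw [fixedBy_zpow_eq (hmono z) (by rintro rfl; simp at hw),
    fixedBy_zpow_eq (hmono z) (by rintro rfl; simp at hv)]

lemma csSup_orbit_mem_fixedPoints (hcont : ∀ g : G, Continuous (g • · : ℝ → ℝ))
    (hmono : ∀ g : G, Monotone (g • · : ℝ → ℝ)) {m : ℝ} (hbdd : BddAbove (orbit G m)) :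
    sSup (orbit G m) ∈ fixedPoints G ℝ := fun g => by
  rw [(hmono g).map_csSup_of_continuousAt (hcont g).continuousAt ⟨m, mem_orbit_self m⟩ hbdd,
    Set.image_smul, smul_orbit]

lemma exists_lt_smul_of_gap (hcont : ∀ g : G, Continuous (g • · : ℝ → ℝ))
    (hmono : ∀ g : G, Monotone (g • · : ℝ → ℝ)) {α β m s : ℝ}
    (hgap : ∀ t ∈ Ioo α β, t ∉ fixedPoints G ℝ) (hm : α < m) (hs : s < β) :
    ∃ u : G, s < u • m := by
  by_contra! h
  have hbdd : BddAbove (orbit G m) := ⟨s, by rintro _ ⟨u, rfl⟩; exact h u⟩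
  have hmσ : m ≤ sSup (orbit G m) := le_csSup hbdd (mem_orbit_self m)
  have hσs : sSup (orbit G m) ≤ s :=
    csSup_le ⟨m, mem_orbit_self m⟩ (by rintro _ ⟨u, rfl⟩; exact h u)
  exact hgap _ ⟨by linarith, by linarith⟩ (csSup_orbit_mem_fixedPoints hcont hmono hbdd)

end Dynamics

/-- For a closed `F` meeting `Iic p`, the largest point of `F` below `p`; for `p ∉ F` it is
the left end of the gap of `F` containing `p`. -/
def gapLeft (F : Set ℝ) (p : ℝ) : ℝ := sSup (F ∩ Iic p)

lemma le_gapLeft {F : Set ℝ} {p q : ℝ} (hq : q ∈ F) (hqp : q ≤ p) : q ≤ gapLeft F p :=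
  le_csSup ⟨p, fun _ h => h.2⟩ ⟨hq, hqp⟩

lemma gapLeft_le {F : Set ℝ} {p : ℝ} (hne : (F ∩ Iic p).Nonempty) : gapLeft F p ≤ p :=
  csSup_le hne fun _ h => h.2

lemma gapLeft_mem {F : Set ℝ} (hF : IsClosed F) {lo p : ℝ} (hlo : lo ∈ F) (hlop : lo ≤ p) :
    gapLeft F p ∈ F :=
  ((hF.inter isClosed_Iic).csSup_mem ⟨lo, hlo, hlop⟩ ⟨p, fun _ h => h.2⟩).1

lemma gapLeft_lt {F : Set ℝ} (hF : IsClosed F) {lo p : ℝ} (hlo : lo ∈ F) (hlop : lo ≤ p)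
    (hp : p ∉ F) : gapLeft F p < p :=
  (gapLeft_le ⟨lo, hlo, hlop⟩).lt_of_ne fun h => hp (h ▸ gapLeft_mem hF hlo hlop)

lemma gapLeft_gapLeft_of_subset {F E : Set ℝ} (hFE : F ⊆ E) {p : ℝ}
    (hne : (E ∩ Iic p).Nonempty) : gapLeft F (gapLeft E p) = gapLeft F p := by
  unfold gapLeft
  congr 1
  ext q
  exact and_congr_right fun hq =>
    ⟨fun h => h.trans (gapLeft_le hne), fun h => le_gapLeft (hFE hq) h⟩

lemma exists_gapRight {F : Set ℝ} (hF : IsClosed F) {p hi : ℝ} (hhi : hi ∈ F) (hphi : p ≤ hi)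
    (hp : p ∉ F) : ∃ β ∈ F, p < β ∧ ∀ t ∈ Ioo (gapLeft F p) β, t ∉ F := by
  have hbdd : BddBelow (F ∩ Ici p) := ⟨p, fun _ h => h.2⟩
  have hmem := (hF.inter isClosed_Ici).csInf_mem ⟨hi, hhi, hphi⟩ hbdd
  refine ⟨_, hmem.1, hmem.2.lt_of_ne fun h => hp (h ▸ hmem.1), fun t ht htF => ?_⟩
  rcases le_total t p with htp | hpt
  · exact (le_gapLeft htF htp).not_gt ht.1
  · exact (csInf_le hbdd ⟨htF, hpt⟩).not_gt ht.2

lemma gapLeft_fixedPoints_smul {G : Type*} [Group G] [MulAction G ℝ] {g : G}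
    (hg : StrictMono (g • · : ℝ → ℝ)) (p : ℝ) :
    gapLeft (fixedPoints G ℝ) (g • p) = gapLeft (fixedPoints G ℝ) p := by
  unfold gapLeft
  congr 1
  ext q
  refine and_congr_right fun hq => ?_
  change q ≤ g • p ↔ q ≤ p
  conv_lhs => rw [← hq g]
  exact hg.le_iff_le

/-- An action on `ℝ` by lifts of piecewise affine circle homeomorphisms. -/
structure IsPeriodicPLAction (G : Type*) [Group G] [MulAction G ℝ] : Prop where
  continuous : ∀ g : G, Continuous (g • · : ℝ → ℝ)
  strictMono : ∀ g : G, StrictMono (g • · : ℝ → ℝ)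
  smul_add_one : ∀ (g : G) (t : ℝ), g • (t + 1) = g • t + 1
  hasAffineGerms : ∀ g : G, HasAffineGerms (g • · : ℝ → ℝ)

/-- The gaps of the global fixed point set met by the support of `w` in `(x₀, x₀ + 1)`,
each recorded by its left end. -/
def supportGaps {G : Type*} [Group G] [MulAction G ℝ] (x₀ : ℝ) (w : G) : Set ℝ :=
  gapLeft (fixedPoints G ℝ) '' (Ioo x₀ (x₀ + 1) \ fixedBy ℝ w)

lemma conj_smul_eq_self_iff {G X : Type*} [Group G] [MulAction G X] (u w : G) (t : X) :
    (u * w * u⁻¹) • t = t ↔ w • u⁻¹ • t = u⁻¹ • t := by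
  rw [← mem_fixedBy, ← smul_fixedBy, Set.mem_smul_set_iff_inv_smul_mem, mem_fixedBy]

section SupportGaps

variable {G : Type*} [Group G] [MulAction G ℝ] {x₀ : ℝ}

lemma supportGaps_commutatorElement_conj_subset (hmono : ∀ g : G, StrictMono (g • · : ℝ → ℝ))
    (hx₀ : x₀ ∈ fixedPoints G ℝ) (hx₁ : x₀ + 1 ∈ fixedPoints G ℝ) (w u : G) :
    supportGaps x₀ ⁅w, u * w * u⁻¹⁆ ⊆ supportGaps x₀ w := by
  rintro _ ⟨p, ⟨hp, hmoved⟩, rfl⟩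
  have hu : u⁻¹ • p ∈ Ioo x₀ (x₀ + 1) := smul_mem_Ioo_of_mem_fixedPoints (hmono u⁻¹) hx₀ hx₁ hp
  by_cases hw : p ∈ fixedBy ℝ w
  · refine ⟨u⁻¹ • p, ⟨hu, fun hwu => hmoved ?_⟩, gapLeft_fixedPoints_smul (hmono u⁻¹) p⟩
    have hv : p ∈ fixedBy ℝ (u * w * u⁻¹) := (conj_smul_eq_self_iff u w p).2 hwu
    have hw' : p ∈ fixedBy ℝ w⁻¹ := by rwa [fixedBy_inv]
    have hv' : p ∈ fixedBy ℝ (u * w * u⁻¹)⁻¹ := by rwa [fixedBy_inv]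
    rw [commutatorElement_def]
    exact fixedBy_mul ℝ _ _ ⟨fixedBy_mul ℝ _ _ ⟨fixedBy_mul ℝ _ _ ⟨hw, hv⟩, hw'⟩, hv'⟩
  · exact ⟨p, ⟨hp, hw⟩, rfl⟩

lemma gapLeft_notMem_supportGaps (hx₀ : x₀ ∈ fixedPoints G ℝ) {α β : ℝ}
    (hα : α ∈ fixedPoints G ℝ) (hβ : β ∈ fixedPoints G ℝ) (hαβ : α < β) {g : G}
    (hfix : ∀ t ∈ Ioo α β, g • t = t) : α ∉ supportGaps x₀ g := by
  rintro ⟨p, ⟨hp, hmoved⟩, rfl⟩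
  have hpF : p ∉ fixedPoints G ℝ := fun h => hmoved (h g)
  have hαp : gapLeft (fixedPoints G ℝ) p < p :=
    (gapLeft_le ⟨x₀, hx₀, hp.1.le⟩).lt_of_ne fun h => hpF (h ▸ hα)
  have hpβ : p < β := lt_of_not_ge fun h => (le_gapLeft hβ h).not_gt hαβ
  exact hmoved (hfix p ⟨hαp, hpβ⟩)

end SupportGaps

namespace IsPeriodicPLAction

variable {G : Type*} [Group G] [MulAction G ℝ] {x₀ : ℝ}

lemma isClosed_fixedPoints (hG : IsPeriodicPLAction G) : IsClosed (fixedPoints G ℝ) := by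
  rw [show fixedPoints G ℝ = ⋂ g : G, fixedBy ℝ g by ext; simp]
  exact isClosed_iInter fun g => isClosed_eq (hG.continuous g) continuous_id

lemma add_one_mem_fixedPoints (hG : IsPeriodicPLAction G) (hx₀ : x₀ ∈ fixedPoints G ℝ) :
    x₀ + 1 ∈ fixedPoints G ℝ := fun g => by rw [hG.smul_add_one, hx₀ g]

lemma exists_mem_Ioo_smul_ne [FaithfulSMul G ℝ] (hG : IsPeriodicPLAction G)
    (hx₀ : x₀ ∈ fixedPoints G ℝ) {w : G} (hw : w ≠ 1) : ∃ p ∈ Ioo x₀ (x₀ + 1), w • p ≠ p := by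
  obtain ⟨t, ht⟩ : ∃ t : ℝ, w • t ≠ t := by
    by_contra! h
    exact hw (eq_of_smul_eq_smul fun t => by rw [h, one_smul])
  set M := ⌊t - x₀⌋
  have hmoved : w • (t - M) ≠ t - M := fun h => ht <| by
    simpa [h] using map_add_intCast_of_map_add_one (hG.smul_add_one w) (t - M) M
  have hlo : x₀ ≤ t - M := by linarith [Int.floor_le (t - x₀)]
  have hne : x₀ ≠ t - M := fun h => hmoved (by rw [← h]; exact hx₀ w)
  exact ⟨t - M, ⟨hlo.lt_of_ne hne, by linarith [Int.lt_floor_add_one (t - x₀)]⟩, hmoved⟩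

lemma eventually_commutatorElement_smul_nhdsGT (hG : IsPeriodicPLAction G) {α : ℝ}
    (hα : α ∈ fixedPoints G ℝ) (p q : G) : ∀ᶠ t in 𝓝[>] α, ⁅p, q⁆ • t = t :=
  eventually_commutatorElement_smul_eq_self (eventually_nhdsWithin_of_forall fun _ ht => ht.ne')
    (fun g => (hG.strictMono g).tendsto_nhdsGT_of_eq (hG.continuous g).continuousAt (hα g))
    (fun g => (hG.hasAffineGerms g).exists_homothety_nhdsGT (hα g)) p q

lemma eventually_commutatorElement_smul_nhdsLT (hG : IsPeriodicPLAction G) {α : ℝ}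
    (hα : α ∈ fixedPoints G ℝ) (p q : G) : ∀ᶠ t in 𝓝[<] α, ⁅p, q⁆ • t = t :=
  eventually_commutatorElement_smul_eq_self (eventually_nhdsWithin_of_forall fun _ ht => ht.ne)
    (fun g => (hG.strictMono g).tendsto_nhdsLT_of_eq (hG.continuous g).continuousAt (hα g))
    (fun g => (hG.hasAffineGerms g).exists_homothety_nhdsLT (hα g)) p q

/-- Each gap met by the support of `w` is recorded as well by the left end `γ` of a component
of the support of `w`, and `γ` is a fixed point of `w` that is a limit of moved points from the
right; there are finitely many of those. -/
lemma finite_supportGaps (hG : IsPeriodicPLAction G) (hx₀ : x₀ ∈ fixedPoints G ℝ) (w : G) :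
    (supportGaps x₀ w).Finite := by
  have hE : IsClosed (fixedBy ℝ w) := isClosed_eq (hG.continuous w) continuous_id
  refine ((hG.hasAffineGerms w).finite_fixed_frequently_ne (hG.continuous w)
    (isCompact_Icc (a := x₀) (b := x₀ + 1))).image (gapLeft (fixedPoints G ℝ)) |>.subset ?_
  rintro _ ⟨p, ⟨hp, hpw⟩, rfl⟩
  have hx₀w : x₀ ∈ fixedBy ℝ w := hx₀ w
  set γ := gapLeft (fixedBy ℝ w) p
  have hγp : γ < p := gapLeft_lt hE hx₀w hp.1.le hpw
  have hmoved : ∃ᶠ u in 𝓝[>] γ, w • u ≠ u :=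
    (eventually_of_mem (Ioo_mem_nhdsGT hγp) fun t ht hfix =>
      (le_gapLeft (F := fixedBy ℝ w) hfix ht.2.le).not_gt ht.1).frequently
  refine ⟨γ, ⟨⟨le_gapLeft hx₀w hp.1.le, by linarith [hp.2]⟩, gapLeft_mem hE hx₀w hp.1.le,
    hmoved⟩, ?_⟩
  exact gapLeft_gapLeft_of_subset (fun t (ht : t ∈ fixedPoints G ℝ) => ht w) ⟨x₀, hx₀w, hp.1.le⟩

lemma exists_support_subset_Icc (hG : IsPeriodicPLAction G) {α β : ℝ}
    (hα : α ∈ fixedPoints G ℝ) (hβ : β ∈ fixedPoints G ℝ) (p q : G) :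
    ∃ m s, α < m ∧ s < β ∧ ∀ t ∈ Ioo α β, ⁅p, q⁆ • t ≠ t → m ≤ t ∧ t ≤ s := by
  obtain ⟨m, hαm, hm⟩ :=
    mem_nhdsGT_iff_exists_Ioo_subset.1 (hG.eventually_commutatorElement_smul_nhdsGT hα p q)
  obtain ⟨s, hsβ, hs⟩ :=
    mem_nhdsLT_iff_exists_Ioo_subset.1 (hG.eventually_commutatorElement_smul_nhdsLT hβ p q)
  refine ⟨m, s, hαm, hsβ, fun t ht hmoved => ⟨?_, ?_⟩⟩
  · exact le_of_not_gt fun h => hmoved (hm ⟨ht.1, h⟩)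
  · exact le_of_not_gt fun h => hmoved (hs ⟨h, ht.2⟩)

lemma exists_conj_fixing (hG : IsPeriodicPLAction G) (hx₀ : x₀ ∈ fixedPoints G ℝ) (p q : G)
    {p₀ : ℝ} (hp₀ : p₀ ∈ Ioo x₀ (x₀ + 1)) (hmoved : ⁅p, q⁆ • p₀ ≠ p₀) :
    ∃ u : G, (u * ⁅p, q⁆ * u⁻¹) • p₀ = p₀ ∧
      gapLeft (fixedPoints G ℝ) p₀ ∉ supportGaps x₀ ⁅⁅p, q⁆, u * ⁅p, q⁆ * u⁻¹⁆ := by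
  set w := ⁅p, q⁆
  set F := fixedPoints G ℝ
  have hF := hG.isClosed_fixedPoints
  have hp₀F : p₀ ∉ F := fun h => hmoved (h w)
  have hα := gapLeft_mem hF hx₀ hp₀.1.le
  have hαp := gapLeft_lt hF hx₀ hp₀.1.le hp₀F
  obtain ⟨β, hβ, hpβ, hgap⟩ :=
    exists_gapRight hF (hG.add_one_mem_fixedPoints hx₀) hp₀.2.le hp₀F
  obtain ⟨m, s, hαm, hsβ, hsupp⟩ := hG.exists_support_subset_Icc hα hβ p q
  obtain ⟨u, hu⟩ := exists_lt_smul_of_gap hG.continuous (fun g => (hG.strictMono g).monotone)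
    hgap hαm hsβ
  have hI : ∀ (g : G), ∀ t ∈ Ioo (gapLeft F p₀) β, g • t ∈ Ioo (gapLeft F p₀) β :=
    fun g _ ht => smul_mem_Ioo_of_mem_fixedPoints (hG.strictMono g) hα hβ ht
  have hvsupp : ∀ t ∈ Ioo (gapLeft F p₀) β, (u * w * u⁻¹) • t ≠ t → s < t := by
    intro t ht hvt
    have hmt := (hsupp _ (hI u⁻¹ t ht) (mt (conj_smul_eq_self_iff u w t).2 hvt)).1
    have := (hG.strictMono u).monotone hmt
    rw [smul_inv_smul] at this
    linarith
  refine ⟨u, ?_, gapLeft_notMem_supportGaps hx₀ hα hβ (hαp.trans hpβ) fun t ht =>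
    commutatorElement_smul_eq_self_of_disjoint hI (fun t ht => ?_) ht⟩
  · by_contra h
    linarith [hvsupp p₀ ⟨hαp, hpβ⟩ h, (hsupp p₀ ⟨hαp, hpβ⟩ hmoved).2]
  · by_contra! h
    linarith [(hsupp t ht h.1).2, hvsupp t ht h.2]

theorem commutatorElement_eq_one [IsFreeGroup G] [FaithfulSMul G ℝ]
    (hG : IsPeriodicPLAction G) (hx₀ : x₀ ∈ fixedPoints G ℝ) (p q : G) : ⁅p, q⁆ = 1 := by
  induction hN : (supportGaps x₀ ⁅p, q⁆).ncard using Nat.strong_induction_on generalizing p q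
    with | _ N ih =>
  by_contra hw
  obtain ⟨p₀, hp₀, hmoved⟩ := hG.exists_mem_Ioo_smul_ne hx₀ hw
  obtain ⟨u, hvp₀, hnotMem⟩ := hG.exists_conj_fixing hx₀ p q hp₀ hmoved
  set w := ⁅p, q⁆
  set v := u * w * u⁻¹
  have hsub : supportGaps x₀ ⁅w, v⁆ ⊂ supportGaps x₀ w :=
    (ssubset_iff_of_subset (supportGaps_commutatorElement_conj_subset hG.strictMono hx₀
      (hG.add_one_mem_fixedPoints hx₀) w u)).2
      ⟨_, ⟨p₀, ⟨hp₀, hmoved⟩, rfl⟩, hnotMem⟩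
  have hcomm : Commute w v := commutatorElement_eq_one_iff_commute.1 <|
    ih _ (hN ▸ Set.ncard_lt_ncard hsub (hG.finite_supportGaps hx₀ w)) w v rfl
  have hv : v ≠ 1 := fun h => hw (by simpa [v] using h)
  exact hmoved <| by
    rw [← mem_fixedBy, fixedBy_eq_of_commute hG.strictMono hcomm hw hv]
    exact hvp₀

theorem isCyclic [IsFreeGroup G] [FaithfulSMul G ℝ] (hG : IsPeriodicPLAction G)
    (hx₀ : x₀ ∈ fixedPoints G ℝ) : IsCyclic G :=
  have : IsMulCommutative G := .of_comm fun p q =>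
    commutatorElement_eq_one_iff_mul_comm.1 (hG.commutatorElement_eq_one hx₀ p q)
  IsFreeGroup.isCyclic_of_isMulCommutative G

end IsPeriodicPLAction

structure IsBasedLift (x₀ : ℝ) (f : Circle1 ≃ₜ Circle1) (F : ℝ → ℝ) : Prop where
  continuous : Continuous F
  lift : ∀ t : ℝ, f t = F t
  map_base : F x₀ = x₀

namespace IsBasedLift

variable {x₀ : ℝ} {f g : Circle1 ≃ₜ Circle1} {F F' : ℝ → ℝ}

theorem unique (hF : IsBasedLift x₀ f F) (hF' : IsBasedLift x₀ f F') : F = F' :=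
  (AddCircle.isCoveringMap_coe 1).eq_of_comp_eq hF.continuous hF'.continuous
    (funext fun t => (hF.lift t).symm.trans (hF'.lift t)) x₀ (hF.map_base.trans hF'.map_base.symm)

lemma one (x₀ : ℝ) : IsBasedLift x₀ 1 id := ⟨continuous_id, fun _ => rfl, rfl⟩

lemma comp (hF : IsBasedLift x₀ f F) (hF' : IsBasedLift x₀ g F') :
    IsBasedLift x₀ (f * g) (F ∘ F') :=
  ⟨hF.continuous.comp hF'.continuous, fun t => (congrArg f (hF'.lift t)).trans (hF.lift _),
    by simp [hF'.map_base, hF.map_base]⟩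

end IsBasedLift

lemma TnMem.exists_isBasedLift {n : ℕ} {f : Circle1 ≃ₜ Circle1} (hf : TnMem n f) {x₀ : ℝ}
    (hfix : f x₀ = x₀) : ∃ F, IsBasedLift x₀ f F ∧ StrictMono F ∧
      (∀ t, F (t + 1) = F t + 1) ∧ HasAffineGerms F := by
  obtain ⟨F, hmono, hper, hlift, hpl⟩ := hf
  obtain ⟨m, hm⟩ : ∃ m : ℤ, (m : ℝ) = F x₀ - x₀ := by
    refine (AddCircle.coe_eq_zero_iff (1 : ℝ)).1 ?_ |>.imp fun m hm => by simpa using hm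
    rw [AddCircle.coe_sub, ← hlift, hfix, sub_self]
  refine ⟨fun t => F t - m, ⟨F.continuous.sub continuous_const, fun t => ?_, by linarith⟩,
    fun a b h => by simpa using hmono h, fun t => by simp [hper]; ring,
    (hpl.hasAffineGerms hper).sub_const m⟩
  have hm0 : ((m : ℝ) : Circle1) = 0 := (AddCircle.coe_eq_zero_iff 1).2 ⟨m, by simp⟩
  rw [hlift, AddCircle.coe_sub, hm0, sub_zero]

open Classical in
def basedLift (x₀ : ℝ) (f : Circle1 ≃ₜ Circle1) : ℝ → ℝ :=
  if h : ∃ F, IsBasedLift x₀ f F then h.choose else id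

lemma IsBasedLift.basedLift_eq {x₀ : ℝ} {f : Circle1 ≃ₜ Circle1} {F : ℝ → ℝ}
    (h : IsBasedLift x₀ f F) : basedLift x₀ f = F := by
  have hex : ∃ F, IsBasedLift x₀ f F := ⟨F, h⟩
  rw [basedLift, dif_pos hex]
  exact hex.choose_spec.unique h

abbrev liftAction {G : Type*} [Group G] (ρ : G →* (Circle1 ≃ₜ Circle1)) (x₀ : ℝ)
    (hρ : ∀ g, ∃ F, IsBasedLift x₀ (ρ g) F) : MulAction G ℝ where
  smul g := basedLift x₀ (ρ g)
  one_smul t := by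
    change basedLift x₀ (ρ 1) t = t
    rw [map_one, (IsBasedLift.one x₀).basedLift_eq, id]
  mul_smul g h t := by
    obtain ⟨F, hF⟩ := hρ g
    obtain ⟨F', hF'⟩ := hρ h
    change basedLift x₀ (ρ (g * h)) t = basedLift x₀ (ρ g) (basedLift x₀ (ρ h) t)
    rw [map_mul, (hF.comp hF').basedLift_eq, hF.basedLift_eq, hF'.basedLift_eq, comp_apply]

theorem IsFreeGroup.isCyclic_of_tnMem_fixing {G : Type*} [Group G] [IsFreeGroup G] {n : ℕ}
    (ρ : G →* (Circle1 ≃ₜ Circle1)) (hρ : Injective ρ) {x₀ : ℝ}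
    (hρT : ∀ g, TnMem n (ρ g) ∧ ρ g x₀ = x₀) : IsCyclic G := by
  choose F hF hmono hper hgerm using fun g => (hρT g).1.exists_isBasedLift (hρT g).2
  let := liftAction ρ x₀ fun g => ⟨F g, hF g⟩
  have hsmul : ∀ g : G, (g • · : ℝ → ℝ) = F g := fun g => (hF g).basedLift_eq
  have hsmul' : ∀ (g : G) (t : ℝ), g • t = F g t := fun g => congrFun (hsmul g)
  have hG : IsPeriodicPLAction G :=
    { continuous := fun g => hsmul g ▸ (hF g).continuous
      strictMono := fun g => hsmul g ▸ hmono g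
      smul_add_one := fun g t => by rw [hsmul', hsmul', hper]
      hasAffineGerms := fun g => hsmul g ▸ hgerm g }
  have : FaithfulSMul G ℝ := ⟨fun {g h} hgh => hρ <| by
    have hFgh : F g = F h := by simpa only [← hsmul] using funext hgh
    ext z
    induction z using QuotientAddGroup.induction_on with
    | H t => rw [(hF g).lift, (hF h).lift, hFgh]⟩
  exact hG.isCyclic fun g => congrFun (hsmul g) x₀ ▸ (hF g).map_base

instance {X : Type*} [TopologicalSpace X] : MulAction (X ≃ₜ X) X where
  smul f x := f x
  one_smul _ := rfl
  mul_smul _ _ _ := rfl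

theorem Subgroup.exists_forall_mem_iff_zpow {G : Type*} [Group G] (S : Subgroup G) [IsCyclic S] :
    ∃ g : G, ∀ h : G, h ∈ S ↔ ∃ m : ℤ, h = g ^ m := by
  obtain ⟨g, hg⟩ := (S.isCyclic_iff_exists_zpowers_eq_top).1 ‹_›
  exact ⟨g, fun h => by simp only [← hg, Subgroup.mem_zpowers_iff, eq_comm]⟩

theorem stabilizer_in_free_subgroup_cyclic_general (n : ℕ)
    (H : Subgroup (Circle1 ≃ₜ Circle1)) (hHT : ∀ f ∈ H, TnMem n f)
    (hfree : IsFreeGroup H)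
    (κ : Circle1) :
    ∃ g : H, ∀ h : H, (h : Circle1 ≃ₜ Circle1) κ = κ ↔ ∃ m : ℤ, h = g ^ m := by
  obtain ⟨x₀, rfl⟩ := QuotientAddGroup.mk_surjective κ
  let S := stabilizer H (x₀ : Circle1)
  have : IsCyclic S := IsFreeGroup.isCyclic_of_tnMem_fixing (H.subtype.comp S.subtype)
    (H.subtype_injective.comp S.subtype_injective) fun g => ⟨hHT _ g.1.2, g.2⟩
  exact S.exists_forall_mem_iff_zpow

/-- If `H` is a non-abelian free subgroup of `T_n` and `κ ∈ ℤ[1/n]/ℤ`, then the stabilizer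
of `κ` in `H` is cyclic: it consists exactly of the integer powers of a single element. -/
theorem stabilizer_in_free_subgroup_cyclic (n : ℕ) (hn : 2 ≤ n)
    (H : Subgroup (Circle1 ≃ₜ Circle1)) (hHT : ∀ f ∈ H, TnMem n f)
    (hfree : IsFreeGroup H) (hnonab : ∃ x y : H, x * y ≠ y * x)
    (κ : Circle1) (hκ : ∃ x : ℝ, IsNAdicRational n x ∧ κ = (x : Circle1)) :
    ∃ g : H, ∀ h : H, (h : Circle1 ≃ₜ Circle1) κ = κ ↔ ∃ m : ℤ, h = g ^ m :=
  stabilizer_in_free_subgroup_cyclic_general n H hHT hfree κ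
end
end

section
/- Let a and b be orientation-preserving self-homeomorphisms of the circle S¹ = ℝ/ℤ such that each c ∈ {a, b, a⁻¹, b⁻¹} has exactly one attracting fixed point in S¹. Suppose for each such c there is a connected closed subset P(c) ⊆ S¹ containing the attracting fixed point of c, such that the four sets P(a), P(b), P(a⁻¹), P(b⁻¹) are pairwise disjoint, and for each such c we have c(S¹ \ P(c⁻¹)) ⊆ P(c) and the restriction of c to S¹ \ P(c⁻¹) is contracting. Then the subgroup ⟨a, b⟩ of the homeomorphism group of S¹ is free of rank 2; equivalently, the homomorphism from the free group on two generators to the homeomorphism group of S¹ sending the generators to a and b is injective. -/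
noncomputable section

/-- `x` is an attracting fixed point of `f`: it is fixed, and there is an open
neighborhood `U` of `x` such that the iterates of every point of `U` converge to `x`. -/
def IsAttractingFixedPt {X : Type*} [TopologicalSpace X] (f : X → X) (x : X) : Prop :=
  f x = x ∧ ∃ U : Set X, IsOpen U ∧ x ∈ U ∧
    ∀ y ∈ U, Filter.Tendsto (fun k => f^[k] y) Filter.atTop (nhds x)

/-- `f` is contracting on the set `S`: it strictly decreases distances between
distinct points of `S`. -/
def ContractingOn {X : Type*} [MetricSpace X] (f : X → X) (S : Set X) : Prop :=
  ∀ x ∈ S, ∀ y ∈ S, x ≠ y → dist (f x) (f y) < dist x y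

/-- A self-homeomorphism of `ℝ/ℤ` is orientation-preserving if it lifts to a strictly
increasing homeomorphism of `ℝ`. -/
def OrientationPreserving (f : Circle1 ≃ₜ Circle1) : Prop :=
  ∃ F : ℝ ≃ₜ ℝ, StrictMono F ∧ ∀ t : ℝ, f ((t : ℝ) : Circle1) = ((F t : ℝ) : Circle1)

/-- The hypotheses of the contracting Ping-Pong Lemma for orientation-preserving
self-homeomorphisms `a, b` of `S¹` with ping-pong sets `Pa, Pb, Pa', Pb'` (for
`a`, `b`, `a⁻¹`, `b⁻¹` respectively). -/
structure ContractingPingPong (a b : Circle1 ≃ₜ Circle1)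
    (Pa Pb Pa' Pb' : Set Circle1) : Prop where
  orient_a : OrientationPreserving a
  orient_b : OrientationPreserving b
  unique_attract_a : ∃! x, IsAttractingFixedPt (⇑a) x
  unique_attract_b : ∃! x, IsAttractingFixedPt (⇑b) x
  unique_attract_a' : ∃! x, IsAttractingFixedPt (⇑a⁻¹) x
  unique_attract_b' : ∃! x, IsAttractingFixedPt (⇑b⁻¹) x
  closed_a : IsClosed Pa
  closed_b : IsClosed Pb
  closed_a' : IsClosed Pa'
  closed_b' : IsClosed Pb'
  connected_a : IsConnected Pa
  connected_b : IsConnected Pb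
  connected_a' : IsConnected Pa'
  connected_b' : IsConnected Pb'
  attract_mem_a : ∀ x, IsAttractingFixedPt (⇑a) x → x ∈ Pa
  attract_mem_b : ∀ x, IsAttractingFixedPt (⇑b) x → x ∈ Pb
  attract_mem_a' : ∀ x, IsAttractingFixedPt (⇑a⁻¹) x → x ∈ Pa'
  attract_mem_b' : ∀ x, IsAttractingFixedPt (⇑b⁻¹) x → x ∈ Pb'
  disj_ab : Disjoint Pa Pb
  disj_aa' : Disjoint Pa Pa'
  disj_ab' : Disjoint Pa Pb'
  disj_ba' : Disjoint Pb Pa'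
  disj_bb' : Disjoint Pb Pb'
  disj_a'b' : Disjoint Pa' Pb'
  maps_a : ⇑a '' Pa'ᶜ ⊆ Pa
  maps_b : ⇑b '' Pb'ᶜ ⊆ Pb
  maps_a' : ⇑a⁻¹ '' Paᶜ ⊆ Pa'
  maps_b' : ⇑b⁻¹ '' Pbᶜ ⊆ Pb'
  contracting_a : ContractingOn (⇑a) Pa'ᶜ
  contracting_b : ContractingOn (⇑b) Pb'ᶜ
  contracting_a' : ContractingOn (⇑a⁻¹) Paᶜ
  contracting_b' : ContractingOn (⇑b⁻¹) Pbᶜ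

/-- The tautological action of the homeomorphism group on the space. -/
instance inst_s3 {X : Type*} [TopologicalSpace X] : MulAction (X ≃ₜ X) X where
  smul f x := f x
  one_smul _ := rfl
  mul_smul _ _ _ := rfl

open Pointwise in
/-- **Contracting Ping-Pong, freeness**: under the contracting ping-pong hypotheses, the
subgroup `⟨a, b⟩` is free of rank 2, i.e. the homomorphism from the free group on two
generators sending the generators to `a` and `b` is injective. -/
theorem pingpong_free (a b : Circle1 ≃ₜ Circle1) (Pa Pb Pa' Pb' : Set Circle1)
    (hpp : ContractingPingPong a b Pa Pb Pa' Pb') :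
    Function.Injective ⇑(FreeGroup.lift ![a, b]) := by
  have hsmul : ∀ (f : Circle1 ≃ₜ Circle1) (s : Set Circle1), f • s = ⇑f '' s := fun _ _ => rfl
  apply FreeGroup.injective_lift_of_ping_pong ![a, b] ![Pa, Pb] ![Pa', Pb']
  · intro i
    fin_cases i
    · obtain ⟨x, hx, -⟩ := hpp.unique_attract_a
      exact ⟨x, hpp.attract_mem_a x hx⟩
    · obtain ⟨x, hx, -⟩ := hpp.unique_attract_b
      exact ⟨x, hpp.attract_mem_b x hx⟩
  · intro i j hij
    fin_cases i <;> fin_cases j <;> simp_all <;>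
      first
        | exact hpp.disj_ab
        | exact hpp.disj_ab.symm
  · intro i j hij
    fin_cases i <;> fin_cases j <;> simp_all <;>
      first
        | exact hpp.disj_a'b'
        | exact hpp.disj_a'b'.symm
  · intro i j
    fin_cases i <;> fin_cases j <;> simp <;>
      first
        | exact hpp.disj_aa'
        | exact hpp.disj_ab'
        | exact hpp.disj_ba'
        | exact hpp.disj_bb'
  · intro i
    fin_cases i <;> rw [hsmul]
    · exact hpp.maps_a
    · exact hpp.maps_b
  · intro i
    fin_cases i <;> rw [hsmul]
    · exact hpp.maps_a'
    · exact hpp.maps_b'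
end
end

section
/- Let a and b be orientation-preserving self-homeomorphisms of the circle S¹ = ℝ/ℤ such that each c ∈ {a, b, a⁻¹, b⁻¹} has exactly one attracting fixed point in S¹. Suppose for each such c there is a connected closed subset P(c) ⊆ S¹ containing the attracting fixed point of c, such that the four sets P(a), P(b), P(a⁻¹), P(b⁻¹) are pairwise disjoint, and for each such c we have c(S¹ \ P(c⁻¹)) ⊆ P(c) and the restriction of c to S¹ \ P(c⁻¹) is contracting. Then every non-trivial element of the subgroup ⟨a, b⟩ has exactly one attracting fixed point in S¹. -/
noncomputable section

/-!
A reduced word `i₁ ⋯ iₙ` in `a, b, a⁻¹, b⁻¹` maps the complement of the ping-pong set of `iₙ⁻¹`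
into the set of `i₁`, contracting distances. For a cyclically reduced word this region contains
the compact set of `i₁`, which is therefore mapped into itself by a contraction; its fixed point
(Edelstein) attracts the whole region. The inverse word contracts the complement of the set of
`i₁`, which contains every other fixed point, so none of them attracts: iterates starting near it
move away. Every nontrivial element of `⟨a, b⟩` is conjugate to a cyclically reduced word.
-/

open Filter Topology Set Function

section Dynamics

variable {X : Type*} [MetricSpace X] {f g g' : X → X} {s t U V K : Set X} {x y : X}

theorem ContractingOn.dist_le (hf : ContractingOn f s) (hx : x ∈ s) (hy : y ∈ s) :
    dist (f x) (f y) ≤ dist x y := by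
  rcases eq_or_ne x y with rfl | hxy
  · simp
  · exact (hf x hx y hy hxy).le

theorem ContractingOn.comp (hf : ContractingOn f t) (hg : ContractingOn g s)
    (hgst : MapsTo g s t) : ContractingOn (f ∘ g) s :=
  fun x hx y hy hxy => (hf.dist_le (hgst hx) (hgst hy)).trans_lt (hg x hx y hy hxy)

theorem ContractingOn.continuousOn (hf : ContractingOn f s) : ContinuousOn f s :=
  (LipschitzOnWith.of_dist_le_mul (K := 1) fun _ hx _ hy => by
    simpa using hf.dist_le hx hy).continuousOn

theorem ContractingOn.eq_of_isFixedPt (hf : ContractingOn f s) (hx : x ∈ s) (hy : y ∈ s)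
    (hfx : IsFixedPt f x) (hfy : IsFixedPt f y) : x = y := by
  by_contra hxy
  simpa [hfx.eq, hfy.eq] using hf x hx y hy hxy

theorem ContractingOn.exists_isFixedPt (hf : ContractingOn f s) (hs : IsCompact s)
    (hne : s.Nonempty) (hmaps : MapsTo f s s) : ∃ x ∈ s, IsFixedPt f x := by
  have hcont := hf.continuousOn
  obtain ⟨x, hx, hmin⟩ := hs.exists_isMinOn hne (f := fun x => dist x (f x)) (by fun_prop)
  refine ⟨x, hx, ?_⟩
  by_contra hfx
  have hlt := hf x hx (f x) (hmaps hx) (Ne.symm hfx)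
  have hle : dist x (f x) ≤ dist (f x) (f (f x)) := hmin (hmaps hx)
  linarith

-- The distances `dist (f^[k] y) x` decrease to some `L`; at a cluster point `z` of the orbit
-- both `dist z x` and `dist (f z) x` equal `L`, which contraction only allows for `z = x`.
theorem ContractingOn.tendsto_iterate (hf : ContractingOn f s) (hs : IsCompact s)
    (hmaps : MapsTo f s s) (hx : x ∈ s) (hfx : IsFixedPt f x) (hy : y ∈ s) :
    Tendsto (fun k => f^[k] y) atTop (𝓝 x) := by
  have horbit : ∀ k, f^[k] y ∈ s := fun k => hmaps.iterate k hy
  set d : ℕ → ℝ := fun k => dist (f^[k] y) x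
  have hanti : Antitone d := antitone_nat_of_succ_le fun k => by
    simpa only [d, iterate_succ_apply', hfx.eq] using hf.dist_le (horbit k) hx (y := x)
  have hd : Tendsto d atTop (𝓝 (⨅ k, d k)) :=
    tendsto_atTop_ciInf hanti ⟨0, by rintro _ ⟨k, rfl⟩; exact dist_nonneg⟩
  obtain ⟨z, hz, φ, hφ, hφz⟩ := hs.tendsto_subseq horbit
  have hdz : dist z x = ⨅ k, d k :=
    tendsto_nhds_unique (hφz.dist tendsto_const_nhds) (hd.comp hφ.tendsto_atTop)
  have hfφz : Tendsto (fun n => f^[φ n + 1] y) atTop (𝓝 (f z)) := by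
    simp only [iterate_succ_apply']
    exact (hf.continuousOn z hz).tendsto.comp
      (tendsto_nhdsWithin_iff.2 ⟨hφz, Eventually.of_forall fun n => horbit (φ n)⟩)
  have hdfz : dist (f z) x = ⨅ k, d k :=
    tendsto_nhds_unique (hfφz.dist tendsto_const_nhds)
      (hd.comp ((tendsto_add_atTop_nat 1).comp hφ.tendsto_atTop))
  have hzx : z = x := by
    by_contra hzx
    have := hf z hz x hx hzx
    rw [hfx.eq, hdz, hdfz] at this
    exact lt_irrefl _ this
  rw [tendsto_iff_dist_tendsto_zero]
  simpa [← hdz, hzx] using hd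

-- Iterates of `g` would approach the fixed point `y` from a punctured neighborhood, while the
-- left inverse `g'` contracts there, so that the distance to `y` grows along the orbit.
theorem not_isAttractingFixedPt_of_contractingOn_leftInverse [(𝓝[≠] y).NeBot]
    (hinv : LeftInverse g' g) (hV : V ∈ 𝓝 y) (hg' : ContractingOn g' V) :
    ¬ IsAttractingFixedPt g y := by
  rintro ⟨hfix, U, hU, hyU, hconv⟩
  obtain ⟨z, ⟨hzU, hzV⟩, hzy⟩ :=
    ((eventually_nhdsWithin_of_eventually_nhds (inter_mem (hU.mem_nhds hyU) hV)).and
      (eventually_mem_nhdsWithin (s := {y}ᶜ))).exists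
  have hz := hconv z hzU
  obtain ⟨N, hN⟩ : ∃ N, ∀ k ≥ N, g^[k] z ∈ V := eventually_atTop.1 (hz hV)
  have hne : ∀ k, g^[k] z ≠ y := fun k hk =>
    hzy (hinv.injective.iterate k (by rw [hk, iterate_fixed hfix]))
  have hg'y : g' y = y := by simpa only [hfix] using hinv y
  have hmono : Monotone fun k => dist (g^[k + N] z) y := monotone_nat_of_le_succ fun k => by
    rw [show k + 1 + N = k + N + 1 by omega]
    have h := hg' _ (hN (k + N + 1) (by omega)) y (mem_of_mem_nhds hV) (hne _)
    simpa only [iterate_succ_apply', hinv.eq, hg'y] using h.le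
  have hlim : Tendsto (fun k => dist (g^[k + N] z) y) atTop (𝓝 0) := by
    simpa using ((tendsto_add_atTop_iff_nat N).2 hz).dist (tendsto_const_nhds (x := y))
  exact (dist_pos.2 (hne N)).not_ge (by simpa using hmono.ge_of_tendsto hlim 0)

theorem existsUnique_isAttractingFixedPt_of_contractingOn [∀ x : X, (𝓝[≠] x).NeBot]
    (hinv : LeftInverse g' g) (hU : IsOpen U) (hV : IsOpen V) (hUV : Uᶜ ⊆ V)
    (hK : IsCompact K) (hKne : K.Nonempty) (hKU : K ⊆ U) (hmaps : MapsTo g U K)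
    (hg : ContractingOn g U) (hg' : ContractingOn g' V) :
    ∃! x, IsAttractingFixedPt g x := by
  have hgK : ContractingOn g K := fun x hx y hy => hg x (hKU hx) y (hKU hy)
  obtain ⟨x, hxK, hfx⟩ := hgK.exists_isFixedPt hK hKne (hmaps.mono_left hKU)
  refine ⟨x, ⟨hfx, U, hU, hKU hxK, fun y hy => ?_⟩, fun y hy => ?_⟩
  · exact (tendsto_add_atTop_iff_nat 1).1 <| by
      simpa only [iterate_succ_apply] using
        hgK.tendsto_iterate hK (hmaps.mono_left hKU) hxK hfx (hmaps hy)
  · by_cases hyU : y ∈ U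
    · exact hg.eq_of_isFixedPt hyU (hKU hxK) hy.1 hfx
    · exact absurd hy (not_isAttractingFixedPt_of_contractingOn_leftInverse hinv
        (hV.mem_nhds (hUV hyU)) hg')

end Dynamics

section Conjugation

variable {X Y : Type*} [TopologicalSpace X] [TopologicalSpace Y]

theorem Function.Semiconj.isAttractingFixedPt {c : X ≃ₜ Y} {g : X → X} {g' : Y → Y}
    (h : Semiconj c g g') {x : X} (hx : IsAttractingFixedPt g x) :
    IsAttractingFixedPt g' (c x) := by
  obtain ⟨hfix, U, hU, hxU, hconv⟩ := hx
  refine ⟨by rw [← h.eq, hfix], c '' U, c.isOpen_image.2 hU, mem_image_of_mem c hxU, ?_⟩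
  rintro _ ⟨u, hu, rfl⟩
  simp only [fun k => ((h.iterate_right k).eq u).symm]
  exact (c.continuous.tendsto x).comp (hconv u hu)

theorem IsConj.existsUnique_isAttractingFixedPt_iff {g h : X ≃ₜ X} (hgh : IsConj g h) :
    (∃! x, IsAttractingFixedPt g x) ↔ ∃! x, IsAttractingFixedPt h x := by
  obtain ⟨c, rfl⟩ := isConj_iff.1 hgh
  have hc : Semiconj c g (c * g * c⁻¹) := fun x => by simp
  have hc' : Semiconj c.symm (c * g * c⁻¹) g := fun x => by simp
  refine c.toEquiv.existsUnique_congr fun x => ⟨hc.isAttractingFixedPt, fun hx => ?_⟩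
  simpa using hc'.isAttractingFixedPt hx

end Conjugation

theorem FreeGroup.lift_mk_singleton {α G : Type*} [Group G] (f : α → G) (i : α × Bool) :
    lift f (mk [i]) = cond i.2 (f i.1) (f i.1)⁻¹ := by
  simp [lift_mk]

theorem FreeGroup.IsReduced.invRev {α : Type*} {L : List (α × Bool)} (h : IsReduced L) :
    IsReduced (invRev L) := by
  classical
  simpa [toWord_mk, reduce_invRev, h.reduce_eq] using isReduced_toWord (x := (mk L)⁻¹)

section PingPong

open FreeGroup

variable {X α : Type*} [MetricSpace X]

/-- `P i` is the ping-pong set of the letter `i` of a word in `FreeGroup α`, whose inverse letter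
is `(i.1, !i.2)`. -/
structure IsContractingPingPong (f : α → X ≃ₜ X) (P : α × Bool → Set X) : Prop where
  pairwise_disjoint : Pairwise (Disjoint on P)
  isCompact : ∀ i, IsCompact (P i)
  nonempty : ∀ i, (P i).Nonempty
  mapsTo : ∀ i, MapsTo (lift f (FreeGroup.mk [i])) (P (i.1, !i.2))ᶜ (P i)
  contractingOn : ∀ i, ContractingOn (lift f (FreeGroup.mk [i])) (P (i.1, !i.2))ᶜ

namespace IsContractingPingPong

variable {f : α → X ≃ₜ X} {P : α × Bool → Set X}

theorem subset_compl (hP : IsContractingPingPong f P) {i j : α × Bool} (hij : i ≠ j) :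
    P i ⊆ (P j)ᶜ :=
  (hP.pairwise_disjoint hij).subset_compl_right

theorem mapsTo_contractingOn_of_isReduced (hP : IsContractingPingPong f P)
    {L : List (α × Bool)} (hL : IsReduced L) (hne : L ≠ []) :
    MapsTo (lift f (FreeGroup.mk L)) (P ((L.getLast hne).1, !(L.getLast hne).2))ᶜ
        (P (L.head hne)) ∧
      ContractingOn (lift f (FreeGroup.mk L)) (P ((L.getLast hne).1, !(L.getLast hne).2))ᶜ := by
  induction L with
  | nil => exact absurd rfl hne
  | cons i w ih =>
    cases w with
    | nil => exact ⟨hP.mapsTo i, hP.contractingOn i⟩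
    | cons j w =>
      obtain ⟨hij, hjw⟩ := isReduced_cons_cons.1 hL
      obtain ⟨hmaps, hcon⟩ := ih hjw (List.cons_ne_nil j w)
      have hPj : P j ⊆ (P (i.1, !i.2))ᶜ := hP.subset_compl fun h => by
        simp [h] at hij
      have hlift : ⇑(lift f (FreeGroup.mk (i :: j :: w))) =
          lift f (FreeGroup.mk [i]) ∘ lift f (FreeGroup.mk (j :: w)) := by
        rw [← List.singleton_append, ← mul_mk, _root_.map_mul]
        rfl
      rw [hlift]
      exact ⟨(hP.mapsTo i).comp (hmaps.mono_right hPj),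
        (hP.contractingOn i).comp hcon (hmaps.mono_right hPj)⟩

theorem existsUnique_isAttractingFixedPt_of_isCyclicallyReduced [∀ x : X, (𝓝[≠] x).NeBot]
    (hP : IsContractingPingPong f P) {L : List (α × Bool)} (hL : IsCyclicallyReduced L)
    (hne : L ≠ []) : ∃! x, IsAttractingFixedPt (lift f (FreeGroup.mk L)) x := by
  set i := L.head hne
  set j := L.getLast hne
  have hij : i ≠ (j.1, !j.2) := fun h => by
    simpa [h] using hL.2 j (List.getLast?_eq_some_getLast hne) i (List.head?_eq_some_head hne)
  obtain ⟨hmaps, hcon⟩ := hP.mapsTo_contractingOn_of_isReduced hL.isReduced hne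
  have hne' : invRev L ≠ [] := by simpa [invRev] using hne
  have hcon' := (hP.mapsTo_contractingOn_of_isReduced hL.isReduced.invRev hne').2
  have hlast : (invRev L).getLast hne' = (i.1, !i.2) := by
    simp [invRev, List.getLast_reverse, List.head_map, i]
  rw [hlast, Bool.not_not, ← inv_mk, _root_.map_inv] at hcon'
  refine existsUnique_isAttractingFixedPt_of_contractingOn
    (fun x => (lift f (FreeGroup.mk L)).symm_apply_apply x)
    (hP.isCompact _).isClosed.isOpen_compl (hP.isCompact i).isClosed.isOpen_compl ?_
    (hP.isCompact i) (hP.nonempty i) (hP.subset_compl hij) hmaps hcon hcon'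
  rw [compl_compl]
  exact hP.subset_compl hij.symm

theorem existsUnique_isAttractingFixedPt [∀ x : X, (𝓝[≠] x).NeBot]
    (hP : IsContractingPingPong f P) {x : FreeGroup α} (hx : lift f x ≠ 1) :
    ∃! y, IsAttractingFixedPt (lift f x) y := by
  classical
  set C := reduceCyclically.conjugator x.toWord
  set R := reduceCyclically x.toWord
  have hconj : lift f x =
      lift f (FreeGroup.mk C) * lift f (FreeGroup.mk R) * (lift f (FreeGroup.mk C))⁻¹ := by
    rw [← _root_.map_inv, ← _root_.map_mul, ← _root_.map_mul, inv_mk, mul_mk, mul_mk,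
      reduceCyclically.conj_conjugator_reduceCyclically, mk_toWord]
  have hR : R ≠ [] := fun h => hx (by simp [hconj, h])
  rw [hconj]
  exact (isConj_iff.2 ⟨_, rfl⟩).existsUnique_isAttractingFixedPt_iff.1 <|
    hP.existsUnique_isAttractingFixedPt_of_isCyclicallyReduced
      (reduceCyclically.isCyclicallyReduced isReduced_toWord) hR

end IsContractingPingPong

end PingPong

instance AddCircle.nontrivial_real {p : ℝ} [Fact (0 < p)] : Nontrivial (AddCircle p) := by
  have hp : 0 < p := Fact.out
  refine ⟨⟨((0 : ℝ) : AddCircle p), ((p / 2 : ℝ) : AddCircle p), fun h => ?_⟩⟩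
  have := (AddCircle.coe_eq_coe_iff_of_mem_Ico (a := 0) (by simp [hp])
    ⟨by linarith, by linarith⟩).1 h
  linarith

def pingPongSets {X : Type*} (Pa Pb Pa' Pb' : Set X) : Fin 2 × Bool → Set X
  | (0, true) => Pa
  | (0, false) => Pa'
  | (1, true) => Pb
  | (1, false) => Pb'

open FreeGroup in
theorem ContractingPingPong.isContractingPingPong {a b : Circle1 ≃ₜ Circle1}
    {Pa Pb Pa' Pb' : Set Circle1} (hpp : ContractingPingPong a b Pa Pb Pa' Pb') :
    IsContractingPingPong ![a, b] (pingPongSets Pa Pb Pa' Pb') where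
  pairwise_disjoint := by
    rintro ⟨i, s⟩ ⟨j, t⟩ hne
    fin_cases i <;> fin_cases j <;> cases s <;> cases t <;>
      simp_all [onFun, pingPongSets, hpp.disj_ab, hpp.disj_aa', hpp.disj_ab', hpp.disj_ba',
        hpp.disj_bb', hpp.disj_a'b', hpp.disj_ab.symm, hpp.disj_aa'.symm, hpp.disj_ab'.symm,
        hpp.disj_ba'.symm, hpp.disj_bb'.symm, hpp.disj_a'b'.symm]
  isCompact := by
    rintro ⟨i, s⟩
    fin_cases i <;> cases s
    exacts [hpp.closed_a'.isCompact, hpp.closed_a.isCompact, hpp.closed_b'.isCompact,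
      hpp.closed_b.isCompact]
  nonempty := by
    rintro ⟨i, s⟩
    fin_cases i <;> cases s
    exacts [hpp.connected_a'.nonempty, hpp.connected_a.nonempty, hpp.connected_b'.nonempty,
      hpp.connected_b.nonempty]
  mapsTo := by
    rintro ⟨i, s⟩
    fin_cases i <;> cases s <;>
      simp only [pingPongSets, lift_mk_singleton, cond_true, cond_false, mapsTo_iff_image_subset]
    exacts [hpp.maps_a', hpp.maps_a, hpp.maps_b', hpp.maps_b]
  contractingOn := by
    rintro ⟨i, s⟩
    fin_cases i <;> cases s <;>
      simp only [pingPongSets, lift_mk_singleton, cond_true, cond_false]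
    exacts [hpp.contracting_a', hpp.contracting_a, hpp.contracting_b', hpp.contracting_b]

/-- **Contracting Ping-Pong, dynamics**: under the contracting ping-pong hypotheses, every
non-trivial element of the subgroup `⟨a, b⟩` has exactly one attracting fixed point. -/
theorem pingpong_unique_attracting (a b : Circle1 ≃ₜ Circle1) (Pa Pb Pa' Pb' : Set Circle1)
    (hpp : ContractingPingPong a b Pa Pb Pa' Pb') :
    ∀ g ∈ Subgroup.closure ({a, b} : Set (Circle1 ≃ₜ Circle1)), g ≠ 1 →
      ∃! x : Circle1, IsAttractingFixedPt (⇑g) x := by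
  intro g hg hg1
  rw [← Matrix.range_cons_cons_empty a b ![], ← FreeGroup.range_lift_eq_closure] at hg
  obtain ⟨x, rfl⟩ := hg
  exact hpp.isContractingPingPong.existsUnique_isAttractingFixedPt hg1
end
end

section
/- Let a and b be orientation-preserving self-homeomorphisms of S¹ = ℝ/ℤ satisfying the contracting ping-pong hypotheses with pairwise disjoint connected closed sets P(a), P(b), P(a⁻¹), P(b⁻¹). Let g ∈ ⟨a, b⟩ be represented by a cyclically reduced word of length at least 2 in the letters {a, b, a⁻¹, b⁻¹}, with rightmost letter c and leftmost letter d (so d ≠ c⁻¹). Then every fixed point of g in S¹ lies in P(c⁻¹) ∪ P(d). -/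
noncomputable section

/-- Formal letters for words in `a, b, a⁻¹, b⁻¹`: the letter `(i, s)` stands for `a` if
`i = 0, s = true`, for `b` if `i = 1, s = true`, and for the corresponding inverse when
`s = false`. -/
abbrev PPLetter := Fin 2 × Bool

/-- The formal inverse of a letter. -/
def PPLetter.formalInv (l : PPLetter) : PPLetter := (l.1, !l.2)

/-- The value of a letter in the group, given `a` and `b`. -/
def letterVal (a b : Circle1 ≃ₜ Circle1) (l : PPLetter) : Circle1 ≃ₜ Circle1 :=
  if l.1 = 0 then (if l.2 then a else a⁻¹) else (if l.2 then b else b⁻¹)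

/-- The ping-pong set attached to a letter. -/
def letterSet (Pa Pb Pa' Pb' : Set Circle1) (l : PPLetter) : Set Circle1 :=
  if l.1 = 0 then (if l.2 then Pa else Pa') else (if l.2 then Pb else Pb')

/-- A word (a list of letters, multiplied left to right so that the rightmost letter is
applied first) is reduced if no letter is adjacent to its formal inverse. -/
def ReducedWord (w : List PPLetter) : Prop :=
  ∀ i, i + 1 < w.length → w.getD (i + 1) default ≠ PPLetter.formalInv (w.getD i default)

/-- A word is cyclically reduced if it is reduced and moreover its first (leftmost) letter
is not the formal inverse of its last (rightmost) letter. -/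
def CyclicallyReducedWord (w : List PPLetter) : Prop :=
  ReducedWord w ∧ w.getD 0 default ≠ PPLetter.formalInv (w.getD (w.length - 1) default)


lemma letterSet_disjoint (a b : Circle1 ≃ₜ Circle1) (Pa Pb Pa' Pb' : Set Circle1)
    (hpp : ContractingPingPong a b Pa Pb Pa' Pb') :
    ∀ l l' : PPLetter, l ≠ l' →
      Disjoint (letterSet Pa Pb Pa' Pb' l) (letterSet Pa Pb Pa' Pb' l') := by
  rintro ⟨i, s⟩ ⟨j, s'⟩ h
  fin_cases i <;> fin_cases j <;> cases s <;> cases s' <;>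
    simp_all [letterSet] <;>
    first
      | exact hpp.disj_ab | exact hpp.disj_ab.symm
      | exact hpp.disj_aa' | exact hpp.disj_aa'.symm
      | exact hpp.disj_ab' | exact hpp.disj_ab'.symm
      | exact hpp.disj_ba' | exact hpp.disj_ba'.symm
      | exact hpp.disj_bb' | exact hpp.disj_bb'.symm
      | exact hpp.disj_a'b' | exact hpp.disj_a'b'.symm

lemma letter_maps (a b : Circle1 ≃ₜ Circle1) (Pa Pb Pa' Pb' : Set Circle1)
    (hpp : ContractingPingPong a b Pa Pb Pa' Pb') (l : PPLetter) (x : Circle1)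
    (hx : x ∉ letterSet Pa Pb Pa' Pb' (PPLetter.formalInv l)) :
    letterVal a b l x ∈ letterSet Pa Pb Pa' Pb' l := by
  rcases l with ⟨i, s⟩
  fin_cases i <;> cases s <;>
    simp_all [letterSet, letterVal, PPLetter.formalInv] <;>
    first
      | exact hpp.maps_a ⟨x, hx, rfl⟩
      | exact hpp.maps_b ⟨x, hx, rfl⟩
      | exact hpp.maps_a' ⟨x, hx, rfl⟩
      | exact hpp.maps_b' ⟨x, hx, rfl⟩

lemma pingpong_key (a b : Circle1 ≃ₜ Circle1) (Pa Pb Pa' Pb' : Set Circle1)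
    (hpp : ContractingPingPong a b Pa Pb Pa' Pb') :
    ∀ w : List PPLetter, w ≠ [] → ReducedWord w → ∀ x : Circle1,
      x ∉ letterSet Pa Pb Pa' Pb' (PPLetter.formalInv (w.getD (w.length - 1) default)) →
      (w.map (letterVal a b)).prod x ∈ letterSet Pa Pb Pa' Pb' (w.getD 0 default) := by
  intro w
  induction w with
  | nil => intro h; exact absurd rfl h
  | cons l t ih =>
    intro _ hred x hx
    rcases t with _ | ⟨l', t'⟩
    · simpa using letter_maps a b Pa Pb Pa' Pb' hpp l x (by simpa using hx)
    · have hred' : ReducedWord (l' :: t') := by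
        intro i hi
        exact hred (i + 1) (by simpa using Nat.succ_lt_succ hi)
      have hlast : (l :: l' :: t').getD ((l :: l' :: t').length - 1) default
          = (l' :: t').getD ((l' :: t').length - 1) default := by
        simp [List.length_cons]
      have hx' : x ∉ letterSet Pa Pb Pa' Pb'
          (PPLetter.formalInv ((l' :: t').getD ((l' :: t').length - 1) default)) := by
        rw [← hlast]; exact hx
      have hmem := ih (by simp) hred' x hx'
      have hne : (l' :: t').getD 0 default ≠ PPLetter.formalInv l := by
        have := hred 0 (by simp)
        simpa using this
      have hnot : ((l' :: t').map (letterVal a b)).prod x ∉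
          letterSet Pa Pb Pa' Pb' (PPLetter.formalInv l) := by
        intro hcon
        exact (letterSet_disjoint a b Pa Pb Pa' Pb' hpp _ _ hne).le_bot ⟨hmem, hcon⟩
      have := letter_maps a b Pa Pb Pa' Pb' hpp l _ hnot
      simpa using this

/-- Under the contracting ping-pong hypotheses, if `g ∈ ⟨a, b⟩` is represented by a
cyclically reduced word of length at least 2 with rightmost letter `c` and leftmost letter
`d`, then every fixed point of `g` lies in `P(c⁻¹) ∪ P(d)`. -/
theorem pingpong_fixed_points_located (a b : Circle1 ≃ₜ Circle1)
    (Pa Pb Pa' Pb' : Set Circle1) (hpp : ContractingPingPong a b Pa Pb Pa' Pb')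
    (w : List PPLetter) (hlen : 2 ≤ w.length) (hcyc : CyclicallyReducedWord w)
    (g : Circle1 ≃ₜ Circle1) (hg : g = (w.map (letterVal a b)).prod) :
    ∀ x : Circle1, g x = x →
      x ∈ letterSet Pa Pb Pa' Pb' (PPLetter.formalInv (w.getD (w.length - 1) default)) ∪
          letterSet Pa Pb Pa' Pb' (w.getD 0 default) := by
  intro x hx
  by_cases hmem : x ∈ letterSet Pa Pb Pa' Pb'
      (PPLetter.formalInv (w.getD (w.length - 1) default))
  · exact Or.inl hmem
  · right
    have hne : w ≠ [] := by rintro rfl; simp at hlen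
    have := pingpong_key a b Pa Pb Pa' Pb' hpp w hne hcyc.1 x hmem
    rwa [← hg, hx] at this
end
end

section
/- Let a ≤ b be real numbers and let f : [a,b] → [a,b] be a map satisfying |f(x) − f(y)| < |x − y| for all x ≠ y in [a,b]. Then f has a unique fixed point x₀ in [a,b], and x₀ is attracting: there is a neighborhood U of x₀ in [a,b] such that for every y ∈ U the sequence of iterates fᵏ(y) converges to x₀. -/
set_option maxHeartbeats 1000000


/-- A map of a (nonempty) compact real interval `[a,b]` into itself which strictly
decreases distances between distinct points has a unique fixed point `x₀`, and `x₀` is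
attracting: every point of some neighborhood of `x₀` in `[a,b]` has its iterates
converging to `x₀`. -/
theorem contracting_selfmap_Icc_unique_attracting_fixedPt (a b : ℝ) (hab : a ≤ b)
    (f : ℝ → ℝ) (hmaps : Set.MapsTo f (Set.Icc a b) (Set.Icc a b))
    (hcontr : ∀ x ∈ Set.Icc a b, ∀ y ∈ Set.Icc a b, x ≠ y → |f x - f y| < |x - y|) :
    ∃ x₀ ∈ Set.Icc a b, f x₀ = x₀ ∧
      (∀ y ∈ Set.Icc a b, f y = y → y = x₀) ∧
      ∃ U : Set ℝ, IsOpen U ∧ x₀ ∈ U ∧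
        ∀ y ∈ U ∩ Set.Icc a b,
          Filter.Tendsto (fun k => f^[k] y) Filter.atTop (nhds x₀) := by
  set K := Set.Icc a b with hK
  have hKc : IsCompact K := isCompact_Icc
  have hKne : K.Nonempty := Set.nonempty_Icc.2 hab
  -- f is 1-Lipschitz on K, hence continuous on K
  have hlip : ∀ x ∈ K, ∀ y ∈ K, |f x - f y| ≤ |x - y| := by
    intro x hx y hy
    rcases eq_or_ne x y with rfl | h
    · simp
    · exact (hcontr x hx y hy h).le
  have hcont : ContinuousOn f K := by
    refine LipschitzOnWith.continuousOn (K := 1) (LipschitzOnWith.of_dist_le_mul ?_)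
    intro x hx y hy
    simpa [Real.dist_eq] using hlip x hx y hy
  -- existence of fixed point: minimize |f x - x|
  have hgc : ContinuousOn (fun x => |f x - x|) K :=
    (hcont.sub continuousOn_id).abs
  obtain ⟨x₀, hx₀K, hmin⟩ := hKc.exists_isMinOn hKne hgc
  have hfix : f x₀ = x₀ := by
    by_contra h
    have h1 : |f (f x₀) - f x₀| < |f x₀ - x₀| := hcontr (f x₀) (hmaps hx₀K) x₀ hx₀K h
    have h2 : |f x₀ - x₀| ≤ |f (f x₀) - f x₀| := hmin (hmaps hx₀K)
    linarith
  refine ⟨x₀, hx₀K, hfix, ?_, Set.univ, isOpen_univ, trivial, ?_⟩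
  · intro y hy hfy
    by_contra h
    have := hcontr y hy x₀ hx₀K h
    rw [hfy, hfix] at this
    exact lt_irrefl _ this
  · rintro y ⟨-, hyK⟩
    -- iterates stay in K
    have hiter : ∀ n, f^[n] y ∈ K := by
      intro n
      induction n with
      | zero => simpa using hyK
      | succ n ih => rw [Function.iterate_succ_apply']; exact hmaps ih
    set d : ℕ → ℝ := fun n => |f^[n] y - x₀| with hd
    have hanti : Antitone d := by
      refine antitone_nat_of_succ_le fun n => ?_
      rw [hd]
      simp only
      rw [Function.iterate_succ_apply']
      calc |f (f^[n] y) - x₀| = |f (f^[n] y) - f x₀| := by rw [hfix]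
        _ ≤ |f^[n] y - x₀| := hlip _ (hiter n) _ hx₀K
    have hdnn : ∀ n, 0 ≤ d n := fun n => abs_nonneg _
    obtain ⟨L, hL⟩ : ∃ L, Filter.Tendsto d Filter.atTop (nhds L) :=
      ⟨_, tendsto_atTop_ciInf hanti ⟨0, fun x ⟨n, hn⟩ => hn ▸ hdnn n⟩⟩
    have hLnn : 0 ≤ L := le_of_tendsto_of_tendsto' tendsto_const_nhds hL hdnn
    have hL0 : L = 0 := by
      by_contra hL0
      have hLpos : 0 < L := lt_of_le_of_ne hLnn (Ne.symm hL0)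
      obtain ⟨z, hzK, φ, hφ, hz⟩ := hKc.tendsto_subseq hiter
      have hdz : Filter.Tendsto (fun k => d (φ k)) Filter.atTop (nhds |z - x₀|) :=
        ((continuous_abs.comp (continuous_id.sub continuous_const)).continuousAt.tendsto.comp hz)
      have hdz' : Filter.Tendsto (fun k => d (φ k)) Filter.atTop (nhds L) :=
        hL.comp (hφ.tendsto_atTop)
      have hzL : |z - x₀| = L := tendsto_nhds_unique hdz hdz'
      -- f^[φ k + 1] y → f z
      have hfz : Filter.Tendsto (fun k => f^[φ k + 1] y) Filter.atTop (nhds (f z)) := by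
        have : Filter.Tendsto (fun k => f (f^[φ k] y)) Filter.atTop (nhds (f z)) :=
          ((hcont z hzK).tendsto.comp
            (tendsto_nhdsWithin_of_tendsto_nhds_of_eventually_within _ hz
              (Filter.Eventually.of_forall fun k => hiter (φ k))))
        simpa [Function.iterate_succ_apply'] using this
      have hdfz : Filter.Tendsto (fun k => d (φ k + 1)) Filter.atTop (nhds |f z - x₀|) :=
        (continuous_abs.comp (continuous_id.sub continuous_const)).continuousAt.tendsto.comp hfz
      have hdfz' : Filter.Tendsto (fun k => d (φ k + 1)) Filter.atTop (nhds L) :=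
        hL.comp (Filter.tendsto_atTop_mono (fun k => Nat.le_succ (φ k)) hφ.tendsto_atTop)
      have hfzL : |f z - x₀| = L := tendsto_nhds_unique hdfz hdfz'
      have hzne : z ≠ x₀ := by
        intro h; rw [h] at hzL; simp at hzL; exact hL0 hzL.symm
      have := hcontr z hzK x₀ hx₀K hzne
      rw [hfix] at this
      rw [hfzL, hzL] at this
      exact lt_irrefl _ this
    rw [hL0] at hL
    have : Filter.Tendsto (fun n => f^[n] y) Filter.atTop (nhds x₀) := by
      rw [tendsto_iff_dist_tendsto_zero]
      simpa [Real.dist_eq, hd] using hL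
    exact this
end

section
/- Let F be a free group and let K be a subgroup of F such that for all g, h ∈ K there exist non-zero integers p and q with gᵖhq = hqgᵖ (i.e., gᵖ and hq commute). Then K is cyclic. -/
/-!
A subgroup of a free group is free (Nielsen–Schreier), so it suffices to show that a free group
in which any two elements have commuting non-trivial powers has at most one generator. For two
distinct generators `a`, `b` this fails already in `SL(2, ℤ)`: sending `a` to `T = !![1, 1; 0, 1]`
and `b` to its conjugate `S * T * S⁻¹ = !![1, 0; -1, 1]`, the powers `!![1, p; 0, 1]` and
`!![1, 0; -q, 1]` commute only when `p * q = 0`.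
-/

open Matrix.SpecialLinearGroup
open scoped MatrixGroups

namespace ModularGroup

theorem not_commute_T_zpow_conj_S_T_zpow {p q : ℤ} (hp : p ≠ 0) (hq : q ≠ 0) :
    ¬ Commute (T ^ p) ((S * T * S⁻¹) ^ q) := by
  intro hc
  have hpq : p * q = 0 := by
    simpa [coe_T_zpow, Matrix.mul_apply, Fin.sum_univ_two] using
      congrArg (fun A : SL(2, ℤ) => A.1 0 0) hc.eq
  exact mul_ne_zero hp hq hpq

end ModularGroup

namespace FreeGroup

theorem not_commute_of_zpow_of_zpow {α : Type*} {a b : α} (hab : a ≠ b) {p q : ℤ}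
    (hp : p ≠ 0) (hq : q ≠ 0) : ¬ Commute (of a ^ p) (of b ^ q) := by
  classical
  intro hc
  let f : FreeGroup α →* SL(2, ℤ) :=
    lift fun c =>
      if c = a then ModularGroup.T else ModularGroup.S * ModularGroup.T * ModularGroup.S⁻¹
  have := hc.map f
  simp only [map_zpow, f, lift_apply_of, if_pos, if_neg hab.symm] at this
  exact ModularGroup.not_commute_T_zpow_conj_S_T_zpow hp hq this

theorem isCyclic_of_subsingleton {α : Type*} [Subsingleton α] : IsCyclic (FreeGroup α) := by
  rcases isEmpty_or_nonempty α with hα | ⟨⟨a⟩⟩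
  · infer_instance
  · let : Unique α := uniqueOfSubsingleton a
    refine isCyclic_iff_exists_zpowers_eq_top.2 ⟨of a, ?_⟩
    rw [Subgroup.zpowers_eq_closure, ← closure_range_of, Set.range_unique]
    rfl

end FreeGroup

theorem IsFreeGroup.isCyclic_of_forall_exists_commute_zpow {G : Type*} [Group G] [IsFreeGroup G]
    (h : ∀ g k : G, ∃ p q : ℤ, p ≠ 0 ∧ q ≠ 0 ∧ Commute (g ^ p) (k ^ q)) : IsCyclic G := by
  have : Subsingleton (Generators G) := by
    refine ⟨fun a b => by_contra fun hab => ?_⟩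
    let e := toFreeGroup G
    obtain ⟨p, q, hp, hq, hc⟩ := h (e.symm (.of a)) (e.symm (.of b))
    exact FreeGroup.not_commute_of_zpow_of_zpow hab hp hq (by simpa using hc.map e)
  have : IsCyclic (FreeGroup (Generators G)) := FreeGroup.isCyclic_of_subsingleton
  exact isCyclic_of_surjective (toFreeGroup G).symm (toFreeGroup G).symm.surjective

/-- If `K` is a subgroup of a free group such that any two elements of `K` have non-trivial
commuting powers, then `K` is cyclic. -/
theorem subgroup_of_free_group_with_commuting_powers_is_cyclic
    (F : Type*) [Group F] [IsFreeGroup F] (K : Subgroup F)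
    (h : ∀ g ∈ K, ∀ k ∈ K, ∃ p q : ℤ, p ≠ 0 ∧ q ≠ 0 ∧ g ^ p * k ^ q = k ^ q * g ^ p) :
    IsCyclic K := by
  refine IsFreeGroup.isCyclic_of_forall_exists_commute_zpow fun g k => ?_
  obtain ⟨p, q, hp, hq, hc⟩ := h g g.2 k k.2
  exact ⟨p, q, hp, hq, Subtype.ext (by simpa using hc)⟩
end

section
/- Let n ≥ 2 and let α be an element of the Higman–Thompson group T_n of finite order (α^m = 1 for some integer m ≥ 1). If α fixes some point of the circle S¹ = ℝ/ℤ, then α is the identity. -/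
noncomputable section

/-!
A lift `F` of `α` moves the fixed point by an integer `k`, so its translation number is `k`.
Since `α ^ m = 1`, `F^[m]` moves every point by an integer, which must then be
`τ (F ^ m) = m * k`; for a monotone degree-one lift, `F^[m] x = x + m * k` forces `F x = x + k`,
and `F` is a lift of the identity.
-/

theorem Homeomorph.coe_pow_eq_iterate {X : Type*} [TopologicalSpace X] (f : X ≃ₜ X) :
    ∀ j : ℕ, ⇑(f ^ j) = f^[j]
  | 0 => rfl
  | j + 1 => by rw [Function.iterate_succ, ← Homeomorph.coe_pow_eq_iterate f j]; rfl

theorem AddCircle.coe_eq_coe_iff_exists_int {a b : ℝ} :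
    (a : AddCircle (1 : ℝ)) = b ↔ ∃ z : ℤ, a = b + z := by
  rw [← sub_eq_zero, ← AddCircle.coe_sub, AddCircle.coe_eq_zero_iff]
  simp only [zsmul_one, eq_sub_iff_add_eq', eq_comm (a := a)]

theorem CircleDeg1Lift.map_eq_add_int_of_forall_pow_map_eq_add_int (f : CircleDeg1Lift)
    {x₀ : ℝ} {k : ℤ} (h₀ : f x₀ = x₀ + k) {m : ℕ} (hm : 0 < m)
    (hpow : ∀ x, ∃ z : ℤ, (f ^ m) x = x + z) (x : ℝ) : f x = x + k := by
  obtain ⟨z, hz⟩ := hpow x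
  have hz_eq : (z : ℝ) = m * k := by
    rw [← (f ^ m).translationNumber_of_eq_add_int hz, f.translationNumber_pow,
      f.translationNumber_of_eq_add_int h₀]
  rw [hz_eq, CircleDeg1Lift.coe_pow] at hz
  exact (f.iterate_pos_eq_iff hm).mp hz

theorem finite_order_elt_of_Tn_with_fixed_point_is_one_general (n : ℕ)
    (α : Circle1 ≃ₜ Circle1) (hα : TnMem n α)
    (m : ℕ) (hm : 1 ≤ m) (hord : α ^ m = 1)
    (hfix : ∃ x : Circle1, α x = x) :
    α = 1 := by
  obtain ⟨F, hF_mono, hF_add_one, hF_lift, -⟩ := hα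
  let f : CircleDeg1Lift := ⟨⟨F, hF_mono.monotone⟩, hF_add_one⟩
  have hsemiconj : Function.Semiconj ((↑) : ℝ → Circle1) f α := fun t => (hF_lift t).symm
  obtain ⟨x, hx⟩ := hfix
  obtain ⟨x₀, rfl⟩ := QuotientAddGroup.mk_surjective x
  obtain ⟨k, hk⟩ := AddCircle.coe_eq_coe_iff_exists_int.mp ((hF_lift x₀).symm.trans hx)
  have hpow : ∀ t, ∃ z : ℤ, (f ^ m) t = t + z := fun t => by
    refine AddCircle.coe_eq_coe_iff_exists_int.mp ?_
    rw [CircleDeg1Lift.coe_pow, (hsemiconj.iterate_right m).eq, ← Homeomorph.coe_pow_eq_iterate,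
      hord]
    rfl
  ext y
  obtain ⟨t, rfl⟩ := QuotientAddGroup.mk_surjective y
  rw [← hsemiconj.eq, f.map_eq_add_int_of_forall_pow_map_eq_add_int hk hm hpow t]
  exact AddCircle.coe_eq_coe_iff_exists_int.mpr ⟨k, rfl⟩

/-- A finite order element of `T_n` fixing a point of the circle is the identity. -/
theorem finite_order_elt_of_Tn_with_fixed_point_is_one (n : ℕ) (hn : 2 ≤ n)
    (α : Circle1 ≃ₜ Circle1) (hα : TnMem n α)
    (m : ℕ) (hm : 1 ≤ m) (hord : α ^ m = 1)
    (hfix : ∃ x : Circle1, α x = x) :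
    α = 1 :=
  finite_order_elt_of_Tn_with_fixed_point_is_one_general n α hα m hm hord hfix
end
end
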